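/- arXiv:2002.07799 — 2 statements merged into one kernel-verified Lean document; each statement's English description precedes it below -/
import Mathlib

section
/- Let G be a tournament with source s and sink t in which every vertex and arc lies on a directed s-t path. Let T be the set of all vertices x such that for some arc (a,b), x is an out-neighbor of a and in-neighbor of b, and there exists a directed s-t path in G - x using (a,b). Then T is a tracking set for G, and moreover every tracking set contains T, so T is minimum. -/
noncomputable def trackSeq {V : Type} (T : Set V) (l : List V) : List V :=
  l.filter (fun v => @decide (v ∈ T) (Classical.propDecidable _))

/-- A directed walk from `s` to `t` in the digraph given by the arc relation `A`,
recorded as its list of vertices. -/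
def IsDiwalk {V : Type} (A : V → V → Prop) (s t : V) (l : List V) : Prop :=
  l ≠ [] ∧ l.Chain' A ∧ l.head? = some s ∧ l.getLast? = some t

/-- A simple directed path from `s` to `t`. -/
def IsDipath {V : Type} (A : V → V → Prop) (s t : V) (l : List V) : Prop :=
  IsDiwalk A s t l ∧ l.Nodup

/-- A tournament: no self-loops and exactly one arc between any two distinct vertices. -/
def IsTournament {V : Type} (A : V → V → Prop) : Prop :=
  (∀ v, ¬ A v v) ∧ (∀ u v : V, u ≠ v → (A u v ↔ ¬ A v u))

/-- The walk `l` uses the arc `(a, b)`. -/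
def ArcIn {V : Type} (a b : V) (l : List V) : Prop :=
  ∃ l1 l2 : List V, l = l1 ++ a :: b :: l2

/-- `T` is a tracking set for directed `s`-`t` paths. -/
def IsDiTrackingSet {V : Type} (A : V → V → Prop) (s t : V) (T : Set V) : Prop :=
  ∀ p q : List V, IsDipath A s t p → IsDipath A s t q →
    trackSeq T p = trackSeq T q → p = q

/-- Every vertex and every arc of the digraph lies on some directed `s`-`t` path. -/
def DiReduced {V : Type} (A : V → V → Prop) (s t : V) : Prop :=
  (∀ v : V, ∃ l : List V, IsDipath A s t l ∧ v ∈ l) ∧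
  (∀ a b : V, A a b → ∃ l : List V, IsDipath A s t l ∧ ArcIn a b l)

/-- The forced trackers: vertices `x` such that for some arc `(a,b)`, `x` is an
out-neighbour of `a` and in-neighbour of `b`, and some `s`-`t` path avoiding `x` uses `(a,b)`. -/
def diForcedSet {V : Type} (A : V → V → Prop) (s t : V) : Set V :=
  {x | ∃ a b : V, A a b ∧ A a x ∧ A x b ∧
    ∃ l : List V, IsDipath A s t l ∧ x ∉ l ∧ ArcIn a b l}


/-!
Since every arc lies on an `s`-`t` path, no arc enters `s` and none leaves `t`. In a tournament
this forces the arcs `s → x → t` for every other vertex `x`, and then also `s → t`; so the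
forced set is exactly `V \ {s, t}` (witnessed by the path `s t`). An `s`-`t` path is
determined by its interior, so tracking all interior vertices suffices; conversely, a tracking
set missing an interior vertex `x` cannot tell the paths `s t` and `s x t` apart.
-/

section Paths

variable {V : Type} {A : V → V → Prop} {s t : V}

theorem ArcIn.mem_tail {a b : V} {l : List V} (h : ArcIn a b l) : b ∈ l.tail := by
  obtain ⟨l₁, l₂, rfl⟩ := h
  cases l₁ <;> simp

theorem ArcIn.mem_dropLast {a b : V} {l : List V} (h : ArcIn a b l) : a ∈ l.dropLast := by
  obtain ⟨l₁, l₂, rfl⟩ := h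
  simp

theorem IsDipath.not_arcIn_into_source {a : V} {l : List V} (hl : IsDipath A s t l) :
    ¬ ArcIn a s l := by
  obtain ⟨ys, rfl⟩ := List.head?_eq_some_iff.1 hl.1.2.2.1
  exact fun h => (List.nodup_cons.1 hl.2).1 h.mem_tail

theorem IsDipath.not_arcIn_out_of_sink {b : V} {l : List V} (hl : IsDipath A s t l) :
    ¬ ArcIn t b l := by
  obtain ⟨ys, rfl⟩ := List.getLast?_eq_some_iff.1 hl.1.2.2.2
  intro h
  have := h.mem_dropLast
  simp only [List.dropLast_concat] at this
  exact List.disjoint_of_nodup_append hl.2 this (List.mem_singleton_self t)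

theorem IsDipath.eq_singleton {l : List V} (hl : IsDipath A s s l) : l = [s] := by
  obtain ⟨ys, rfl⟩ := List.head?_eq_some_iff.1 hl.1.2.2.1
  rcases List.eq_nil_or_concat ys with rfl | ⟨zs, z, rfl⟩
  · rfl
  · rw [List.concat_eq_append] at hl
    have hz : z = s := by simpa [List.getLast?_cons] using hl.1.2.2.2
    subst hz
    have hnd := hl.2
    simp at hnd

theorem IsDipath.eq_cons_append {l : List V} (hl : IsDipath A s t l) (hst : s ≠ t) :
    ∃ mid : List V, l = s :: (mid ++ [t]) ∧ ∀ x ∈ mid, x ≠ s ∧ x ≠ t := by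
  obtain ⟨ys, rfl⟩ := List.head?_eq_some_iff.1 hl.1.2.2.1
  rcases List.eq_nil_or_concat ys with rfl | ⟨mid, z, rfl⟩
  · exact absurd (by simpa using hl.1.2.2.2) hst
  · rw [List.concat_eq_append] at hl ⊢
    have hz : z = t := by simpa [List.getLast?_cons] using hl.1.2.2.2
    subst hz
    have hnd := hl.2
    rw [List.nodup_cons, List.nodup_append] at hnd
    refine ⟨mid, rfl, fun x hx => ⟨?_, hnd.2.2.2 x hx z (List.mem_singleton_self z)⟩⟩
    rintro rfl
    exact hnd.1 (List.mem_append_left _ hx)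

theorem isDipath_pair (hst : s ≠ t) (h : A s t) : IsDipath A s t [s, t] :=
  ⟨⟨List.cons_ne_nil _ _, List.isChain_pair.2 h, rfl, rfl⟩, by simp [hst]⟩

theorem isDipath_triple {x : V} (hnd : [s, x, t].Nodup) (hsx : A s x) (hxt : A x t) :
    IsDipath A s t [s, x, t] :=
  ⟨⟨List.cons_ne_nil _ _, List.isChain_cons_cons.2 ⟨hsx, List.isChain_pair.2 hxt⟩, rfl, rfl⟩,
    hnd⟩

end Paths

section Tracking

variable {V : Type} {A : V → V → Prop} {s t : V} {T : Set V}

theorem trackSeq_append (l₁ l₂ : List V) :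
    trackSeq T (l₁ ++ l₂) = trackSeq T l₁ ++ trackSeq T l₂ :=
  List.filter_append ..

theorem trackSeq_eq_self {l : List V} (h : ∀ x ∈ l, x ∈ T) : trackSeq T l = l :=
  List.filter_eq_self.2 fun x hx => by simpa using h x hx

theorem isDiTrackingSet_of_forall_ne (hT : ∀ x, x ≠ s → x ≠ t → x ∈ T) :
    IsDiTrackingSet A s t T := by
  intro p q hp hq hpq
  by_cases hst : s = t
  · subst hst
    rw [hp.eq_singleton, hq.eq_singleton]
  have htrack : ∀ mid : List V, (∀ x ∈ mid, x ≠ s ∧ x ≠ t) →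
      trackSeq T (s :: (mid ++ [t])) = trackSeq T [s] ++ mid ++ trackSeq T [t] := by
    intro mid hmid
    rw [← List.singleton_append, ← List.append_assoc, trackSeq_append, trackSeq_append,
      trackSeq_eq_self fun x hx => hT x (hmid x hx).1 (hmid x hx).2]
  obtain ⟨mp, rfl, hmp⟩ := hp.eq_cons_append hst
  obtain ⟨mq, rfl, hmq⟩ := hq.eq_cons_append hst
  rw [htrack mp hmp, htrack mq hmq] at hpq
  rw [List.append_cancel_left (List.append_cancel_right hpq)]

theorem IsDiTrackingSet.mem (hT : IsDiTrackingSet A s t T) {x : V} (hnd : [s, x, t].Nodup)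
    (hst : A s t) (hsx : A s x) (hxt : A x t) : x ∈ T := by
  by_contra hx
  have hne : s ≠ t := by simp_all
  have := hT _ _ (isDipath_pair hne hst) (isDipath_triple hnd hsx hxt)
    (by simp [trackSeq, List.filter_cons, hx])
  simp at this

end Tracking

section Tournament

variable {V : Type} {A : V → V → Prop} {s t : V}

theorem IsTournament.asymm (htour : IsTournament A) {u v : V} (h : A u v) : ¬ A v u := by
  by_cases huv : u = v
  · subst huv
    exact htour.1 u
  · exact (htour.2 u v huv).1 h

theorem DiReduced.not_arc_into_source (hred : DiReduced A s t) (a : V) : ¬ A a s := fun h =>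
  let ⟨_, hl, harc⟩ := hred.2 a s h
  hl.not_arcIn_into_source harc

theorem DiReduced.not_arc_out_of_sink (hred : DiReduced A s t) (b : V) : ¬ A t b := fun h =>
  let ⟨_, hl, harc⟩ := hred.2 t b h
  hl.not_arcIn_out_of_sink harc

theorem DiReduced.arc_from_source (hred : DiReduced A s t) (htour : IsTournament A)
    {x : V} (hx : x ≠ s) : A s x :=
  (htour.2 s x hx.symm).2 (hred.not_arc_into_source x)

theorem DiReduced.arc_to_sink (hred : DiReduced A s t) (htour : IsTournament A)
    {x : V} (hx : x ≠ t) : A x t :=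
  (htour.2 x t hx).2 (hred.not_arc_out_of_sink x)

theorem DiReduced.source_ne_sink (hred : DiReduced A s t) (htour : IsTournament A)
    {x : V} (hxs : x ≠ s) (hxt : x ≠ t) :
    s ≠ t := by
  rintro rfl
  exact htour.asymm (hred.arc_from_source htour hxs) (hred.arc_to_sink htour hxt)

theorem diForcedSet_eq_setOf_ne (htour : IsTournament A) (hred : DiReduced A s t) :
    diForcedSet A s t = {x | x ≠ s ∧ x ≠ t} := by
  ext x
  constructor
  · rintro ⟨a, b, -, hax, hxb, -⟩
    exact ⟨fun h => hred.not_arc_into_source a (h ▸ hax),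
      fun h => hred.not_arc_out_of_sink b (h ▸ hxb)⟩
  · rintro ⟨hxs, hxt⟩
    have hst := hred.source_ne_sink htour hxs hxt
    exact ⟨s, t, hred.arc_from_source htour hst.symm, hred.arc_from_source htour hxs,
      hred.arc_to_sink htour hxt, [s, t], isDipath_pair hst (hred.arc_from_source htour hst.symm),
      by simp [hxs, hxt], [], [], rfl⟩

theorem DiReduced.subset_of_isDiTrackingSet (hred : DiReduced A s t) (htour : IsTournament A)
    {T : Set V} (hT : IsDiTrackingSet A s t T) : {x | x ≠ s ∧ x ≠ t} ⊆ T := by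
  rintro x ⟨hxs, hxt⟩
  have hst := hred.source_ne_sink htour hxs hxt
  exact hT.mem (by simp [hst, hxs.symm, hxt]) (hred.arc_from_source htour hst.symm)
    (hred.arc_from_source htour hxs) (hred.arc_to_sink htour hxt)

end Tournament

theorem stmt7 {V : Type} [Fintype V] (A : V → V → Prop) (htour : IsTournament A)
    (s t : V) (hred : DiReduced A s t) :
    IsDiTrackingSet A s t (diForcedSet A s t) ∧
    (∀ T' : Set V, IsDiTrackingSet A s t T' → diForcedSet A s t ⊆ T') ∧
    (∀ T' : Set V, IsDiTrackingSet A s t T' →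
      (diForcedSet A s t).ncard ≤ T'.ncard) := by
  rw [diForcedSet_eq_setOf_ne htour hred]
  refine ⟨isDiTrackingSet_of_forall_ne fun x hxs hxt => ⟨hxs, hxt⟩,
    fun T' hT' => hred.subset_of_isDiTrackingSet htour hT', fun T' hT' => ?_⟩
  exact Set.ncard_le_ncard (hred.subset_of_isDiTrackingSet htour hT') (Set.toFinite T')
end

section
/- Let G be a simple undirected graph with source s and sink t, in which every vertex and edge lies on an s-t path. Let S be a feedback vertex set of G, and let T = S ∪ N(S) be S together with all neighbors of vertices in S. Then T is a tracking set for G. -/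
/-!
Let `p`, `q` be `s`-`t` paths with the same tracker sequence and induct on the length of `p`.
If some vertex `v ≠ s, t` of `p` is a tracker, it occurs
exactly once in each path and in each tracker sequence, so both paths split at `v` into pieces with
equal tracker sequences. Otherwise neither path has an interior tracker. If `s ∈ S`, the second
vertex is a tracker, so each path is the single edge `st`; symmetrically if `t ∈ S`. If
`s, t ∉ S`, then both paths avoid `S` (every vertex of `S` is a tracker) and so lie in the forest
`G - S`, where paths are unique.
-/

open SimpleGraph

/-- `T` is a tracking set for `s`-`t` paths in `G`: distinct `s`-`t` paths have
distinct sequences of `T`-vertices along them. -/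
def IsTrackingSet {V : Type} (G : SimpleGraph V) (s t : V) (T : Set V) : Prop :=
  ∀ p q : G.Walk s t, p.IsPath → q.IsPath →
    trackSeq T p.support = trackSeq T q.support → p = q

/-- Every vertex and every edge of `G` lies on some `s`-`t` path. -/
def Reduced {V : Type} (G : SimpleGraph V) (s t : V) : Prop :=
  (∀ v : V, ∃ p : G.Walk s t, p.IsPath ∧ v ∈ p.support) ∧
  (∀ e ∈ G.edgeSet, ∃ p : G.Walk s t, p.IsPath ∧ e ∈ p.edges)

/-- `S` is a feedback vertex set: every cycle of `G` meets `S`. -/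
def IsFVS {V : Type} (G : SimpleGraph V) (S : Set V) : Prop :=
  ∀ (v : V) (c : G.Walk v v), c.IsCycle → ∃ x ∈ c.support, x ∈ S

/-- The neighbourhood of a set of vertices. -/
def nbhd {V : Type} (G : SimpleGraph V) (S : Set V) : Set V :=
  {v | ∃ u ∈ S, G.Adj u v}

variable {V : Type} {G : SimpleGraph V} {S T : Set V} {s t u v w : V}

section trackSeq

variable {l l' r : List V}

theorem mem_trackSeq : v ∈ trackSeq T l ↔ v ∈ l ∧ v ∈ T := by
  simp [trackSeq]

theorem mem_of_trackSeq_eq (h : trackSeq T l = trackSeq T l') (hv : v ∈ T) (hl' : v ∈ l') :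
    v ∈ l :=
  (mem_trackSeq.1 (h ▸ mem_trackSeq.2 ⟨hl', hv⟩)).1

theorem trackSeq_append_cons_of_mem (hv : v ∈ T) :
    trackSeq T (l ++ v :: r) = trackSeq T l ++ v :: trackSeq T r := by
  simp [trackSeq, hv]

end trackSeq

namespace SimpleGraph.Walk

variable [DecidableEq V]

theorem support_eq_dropLast_takeUntil_append (p : G.Walk u w) (h : v ∈ p.support) :
    p.support = (p.takeUntil v h).support.dropLast ++ v :: (p.dropUntil v h).support.tail := by
  conv_lhs => rw [← p.take_spec h, support_append_eq_support_dropLast_append,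
    ← cons_tail_support (p.dropUntil v h)]

theorem IsPath.trackSeq_takeUntil_dropUntil_eq {p q : G.Walk u w} (hp : p.IsPath)
    (hvT : v ∈ T) (hvp : v ∈ p.support) (hvq : v ∈ q.support)
    (h : trackSeq T p.support = trackSeq T q.support) :
    trackSeq T (p.takeUntil v hvp).support = trackSeq T (q.takeUntil v hvq).support ∧
      trackSeq T (p.dropUntil v hvp).support = trackSeq T (q.dropUntil v hvq).support := by
  have hnd := hp.support_nodup
  rw [support_eq_dropLast_takeUntil_append p hvp] at h hnd
  rw [support_eq_dropLast_takeUntil_append q hvq, trackSeq_append_cons_of_mem hvT,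
    trackSeq_append_cons_of_mem hvT] at h
  rw [List.nodup_middle, List.nodup_cons, List.mem_append, not_or] at hnd
  obtain ⟨hl, -, hr⟩ := (List.append_cons_inj_of_notMem
    (fun hm => hnd.1.1 (mem_trackSeq.1 hm).1) (fun hm => hnd.1.2 (mem_trackSeq.1 hm).1)).1 h
  rw [← dropLast_support_concat (p.takeUntil v hvp), ← dropLast_support_concat (q.takeUntil v hvq),
    ← cons_tail_support (p.dropUntil v hvp), ← cons_tail_support (q.dropUntil v hvq)]
  simp only [trackSeq, List.filter_append, List.filter_cons] at hl hr ⊢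
  exact ⟨by rw [hl], by rw [hr]⟩

end SimpleGraph.Walk

namespace IsFVS

open Walk

theorem isAcyclic_deleteVerts (hS : IsFVS G S) :
    ((⊤ : G.Subgraph).deleteVerts S).spanningCoe.IsAcyclic := by
  intro v c hc
  obtain ⟨x, hxc, hxS⟩ := hS v (c.mapLe (Subgraph.spanningCoe_le _)) (hc.mapLe _)
  rw [support_mapLe_eq_support, mem_support_iff_exists_mem_edges_of_not_nil hc.not_nil] at hxc
  obtain ⟨e, he, hxe⟩ := hxc
  have hH := c.edges_subset_edgeSet he
  induction e using Sym2.ind with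
  | _ a b =>
    simp only [Sym2.mem_iff] at hxe
    simp only [Subgraph.edgeSet_spanningCoe, Subgraph.mem_edgeSet, Subgraph.induce_adj,
      Subgraph.verts_top, Set.mem_sdiff, Set.mem_univ, true_and, Subgraph.top_adj] at hH
    rcases hxe with rfl | rfl <;> tauto

theorem path_unique_of_notMem (hS : IsFVS G S) {p q : G.Walk u v} (hp : p.IsPath) (hq : q.IsPath)
    (hpS : ∀ x ∈ p.support, x ∉ S) (hqS : ∀ x ∈ q.support, x ∉ S) : p = q := by
  have edges_subset : ∀ r : G.Walk u v, (∀ x ∈ r.support, x ∉ S) →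
      ∀ e ∈ r.edges, e ∈ ((⊤ : G.Subgraph).deleteVerts S).spanningCoe.edgeSet := by
    intro r hrS e he
    induction e using Sym2.ind with
    | _ a b =>
      simp [r.adj_of_mem_edges he, hrS a (r.fst_mem_support_of_mem_edges he),
        hrS b (r.snd_mem_support_of_mem_edges he)]
  have := (hS.isAcyclic_deleteVerts.subsingleton_path u v).elim
    ⟨_, hp.transfer (edges_subset p hpS)⟩ ⟨_, hq.transfer (edges_subset q hqS)⟩
  exact ext_support (by simpa using congrArg (fun r => r.1.support) this)

end IsFVS

namespace SimpleGraph.Walk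

def IsInteriorDisjoint (p : G.Walk u v) (T : Set V) : Prop :=
  ∀ x ∈ p.support, x ∈ T → x = u ∨ x = v

theorem IsInteriorDisjoint.reverse {p : G.Walk u v} (h : p.IsInteriorDisjoint T) :
    p.reverse.IsInteriorDisjoint T := fun x hx hxT =>
  (h x (by simpa using hx) hxT).symm

theorem IsPath.exists_eq_cons_nil_of_start_mem {p : G.Walk s t} (hp : p.IsPath) (hs : s ∈ S)
    (hst : s ≠ t) (hpT : p.IsInteriorDisjoint (S ∪ nbhd G S)) :
    ∃ h : G.Adj s t, p = cons h Walk.nil := by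
  cases p with
  | nil => exact absurd rfl hst
  | @cons _ u _ h p' =>
    obtain rfl : u = t := (hpT u (by simp) (Or.inr ⟨s, hs, h⟩)).resolve_left (G.ne_of_adj h).symm
    exact ⟨h, by rw [(isPath_iff_nil.1 hp.of_cons).eq_nil]⟩

end SimpleGraph.Walk

open Walk

theorem IsFVS.eq_of_isInteriorDisjoint (hS : IsFVS G S) {p q : G.Walk s t} (hp : p.IsPath)
    (hq : q.IsPath) (hpT : p.IsInteriorDisjoint (S ∪ nbhd G S))
    (hqT : q.IsInteriorDisjoint (S ∪ nbhd G S)) : p = q := by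
  by_cases hst : s = t
  · subst hst
    rw [(isPath_iff_nil.1 hp).eq_nil, (isPath_iff_nil.1 hq).eq_nil]
  by_cases hs : s ∈ S
  · obtain ⟨_, rfl⟩ := hp.exists_eq_cons_nil_of_start_mem hs hst hpT
    obtain ⟨_, rfl⟩ := hq.exists_eq_cons_nil_of_start_mem hs hst hqT
    rfl
  by_cases ht : t ∈ S
  · apply reverse_injective
    obtain ⟨_, hp'⟩ := hp.reverse.exists_eq_cons_nil_of_start_mem ht (Ne.symm hst) hpT.reverse
    obtain ⟨_, hq'⟩ := hq.reverse.exists_eq_cons_nil_of_start_mem ht (Ne.symm hst) hqT.reverse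
    rw [hp', hq']
  have avoids {r : G.Walk s t} (hrT : r.IsInteriorDisjoint (S ∪ nbhd G S)) :
      ∀ x ∈ r.support, x ∉ S := by
    rintro x hx hxS
    rcases hrT x hx (Or.inl hxS) with rfl | rfl <;> contradiction
  exact hS.path_unique_of_notMem hp hq (avoids hpT) (avoids hqT)

-- `s` and `t` are bound here rather than taken from `variable`, since section variables are fixed
-- in recursive calls.
theorem IsFVS.eq_of_trackSeq_eq (hS : IsFVS G S) {s t : V} {p q : G.Walk s t} (hp : p.IsPath)
    (hq : q.IsPath)
    (h : trackSeq (S ∪ nbhd G S) p.support = trackSeq (S ∪ nbhd G S) q.support) : p = q := by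
  classical
  by_cases hpT : p.IsInteriorDisjoint (S ∪ nbhd G S)
  · exact hS.eq_of_isInteriorDisjoint hp hq hpT fun x hx hxT =>
      hpT x (mem_of_trackSeq_eq h hxT hx) hxT
  simp only [IsInteriorDisjoint, not_forall, not_or] at hpT
  obtain ⟨v, hvp, hvT, hvs, hvt⟩ := hpT
  have hvq := mem_of_trackSeq_eq h.symm hvT hvp
  obtain ⟨htake, hdrop⟩ := hp.trackSeq_takeUntil_dropUntil_eq hvT hvp hvq h
  rw [← p.take_spec hvp, ← q.take_spec hvq,
    hS.eq_of_trackSeq_eq (hp.takeUntil hvp) (hq.takeUntil hvq) htake,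
    hS.eq_of_trackSeq_eq (hp.dropUntil hvp) (hq.dropUntil hvq) hdrop]
termination_by p.length
decreasing_by
  · classical exact length_takeUntil_lt_length hvp hvt
  · classical exact length_dropUntil_lt_length hvp hvs

theorem stmt8_general {V : Type} (G : SimpleGraph V) (s t : V)
    (S : Set V) (hS : IsFVS G S) :
    IsTrackingSet G s t (S ∪ nbhd G S) :=
  fun _ _ hp hq h => hS.eq_of_trackSeq_eq hp hq h

theorem stmt8 {V : Type} [Fintype V] (G : SimpleGraph V) (s t : V)
    (hred : Reduced G s t) (S : Set V) (hS : IsFVS G S) :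
    IsTrackingSet G s t (S ∪ nbhd G S) :=
  stmt8_general G s t S hS
end
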